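/- arXiv:2112.13084 — 2 statements merged into one kernel-verified Lean document; each statement's English description precedes it below -/
import Mathlib

section
/- The group presented by ⟨b, u | bub = u⟩ is torsion-free. -/
def kleinRels : Set (FreeGroup Bool) :=
  {FreeGroup.of false * FreeGroup.of true * FreeGroup.of false * (FreeGroup.of true)⁻¹}

/-- The group `⟨b, u | bub = u⟩`. -/
def KleinGroup := PresentedGroup kleinRels

instance : Group KleinGroup := by unfold KleinGroup; infer_instance

/-!
Sending `b ↦ (1, 0)` and `u ↦ (0, 1)` maps the group to `ℤ ⋊ ℤ`, the second factor acting on the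
first by negation. The relation `u b u⁻¹ = b⁻¹` is what makes `(m, n) ↦ bᵐ uⁿ` a homomorphism
back, and it is a left inverse, so the first map is injective. An element of finite order in
`ℤ ⋊ ℤ` maps to `0` in the torsion-free quotient `ℤ`, so it lies in the torsion-free subgroup
`ℤ × 0` and is trivial.
-/

open Multiplicative

theorem SemidirectProduct.eq_one_of_isOfFinOrder {N G : Type*} [Group N] [Group G]
    [IsMulTorsionFree N] [IsMulTorsionFree G] {φ : G →* MulAut N} {x : N ⋊[φ] G}
    (hx : IsOfFinOrder x) : x = 1 := by
  have hright : x.right = 1 := (rightHom.isOfFinOrder hx).eq_one'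
  have hx_inl : x = inl x.left := by
    rw [← inl_left_mul_inr_right x, hright, map_one, mul_one, left_inl]
  rw [hx_inl] at hx ⊢
  rw [(inl_injective.isOfFinOrder_iff.mp hx).eq_one', map_one]

theorem MonoidHom.comp_zpow_eq_zpow_comp {M N : Type*} [Monoid M] [Monoid N] (f : M →* N)
    {α : MulAut M} {β : MulAut N} (h : f.comp α.toMonoidHom = β.toMonoidHom.comp f) (t : ℤ) :
    f.comp (α ^ t).toMonoidHom = (β ^ t).toMonoidHom.comp f := by
  have h' : ∀ x, f (α x) = β (f x) := DFunLike.ext_iff.mp h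
  have h_inv : ∀ x, f (α⁻¹ x) = β⁻¹ (f x) := fun x => by
    rw [← MulAut.inv_apply_self N β (f (α⁻¹ x)), ← h', MulAut.apply_inv_self]
  ext x
  simp only [MonoidHom.comp_apply, MulEquiv.coe_toMonoidHom]
  induction t using Int.induction_on generalizing x with
  | zero => rfl
  | succ t ih => rw [zpow_add_one, zpow_add_one, MulAut.mul_apply, MulAut.mul_apply, ih, h']
  | pred t ih => rw [zpow_sub_one, zpow_sub_one, MulAut.mul_apply, MulAut.mul_apply, ih, h_inv]

namespace KleinGroup

def b : KleinGroup := PresentedGroup.of false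

def u : KleinGroup := PresentedGroup.of true

theorem b_mul_u_mul_b : b * u * b = u := by
  have : PresentedGroup.mk kleinRels
      (FreeGroup.of false * FreeGroup.of true * FreeGroup.of false * (FreeGroup.of true)⁻¹) = 1 :=
    (QuotientGroup.eq_one_iff _).2 (Subgroup.subset_normalClosure rfl)
  simp only [map_mul, map_inv, mul_inv_eq_one] at this
  exact this

theorem u_mul_b_mul_u_inv : u * b * u⁻¹ = b⁻¹ := by
  rw [mul_inv_eq_iff_eq_mul, eq_inv_mul_iff_mul_eq, ← mul_assoc, b_mul_u_mul_b]

def negAut : Multiplicative ℤ →* MulAut (Multiplicative ℤ) := zpowersHom _ (MulEquiv.inv _)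

abbrev Model := Multiplicative ℤ ⋊[negAut] Multiplicative ℤ

def toModel : KleinGroup →* Model :=
  PresentedGroup.toGroup (f := fun x => if x then .inr (ofAdd 1) else .inl (ofAdd 1)) <| by
    rintro _ rfl
    ext <;> rfl

theorem zpowersHom_b_comp_negAut (g : Multiplicative ℤ) :
    (zpowersHom _ b).comp (negAut g).toMonoidHom =
      (MulAut.conj (zpowersHom _ u g)).toMonoidHom.comp (zpowersHom _ b) := by
  have base : (zpowersHom _ b).comp (MulEquiv.inv _).toMonoidHom =
      (MulAut.conj u).toMonoidHom.comp (zpowersHom _ b) := by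
    ext; simp [u_mul_b_mul_u_inv]
  simpa [negAut, map_zpow] using (zpowersHom _ b).comp_zpow_eq_zpow_comp base g.toAdd

def ofModel : Model →* KleinGroup := SemidirectProduct.lift (zpowersHom _ b) (zpowersHom _ u)
  zpowersHom_b_comp_negAut

theorem toModel_b : toModel b = .inl (ofAdd 1) := PresentedGroup.toGroup.of _

theorem toModel_u : toModel u = .inr (ofAdd 1) := PresentedGroup.toGroup.of _

theorem ofModel_comp_toModel : ofModel.comp toModel = MonoidHom.id _ := by
  apply PresentedGroup.ext
  rintro (_ | _)
  · show ofModel (toModel b) = b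
    simp [toModel_b, ofModel]
  · show ofModel (toModel u) = u
    simp [toModel_u, ofModel]

theorem toModel_injective : Function.Injective toModel :=
  Function.LeftInverse.injective (g := ofModel) (DFunLike.congr_fun ofModel_comp_toModel)

end KleinGroup

/-- The group `⟨b, u | bub = u⟩` is torsion-free. -/
theorem klein_group_torsion_free : ∀ g : KleinGroup, g ≠ 1 → ¬IsOfFinOrder g := by
  intro g hg hfin
  apply hg
  apply KleinGroup.toModel_injective
  rw [map_one]
  exact SemidirectProduct.eq_one_of_isOfFinOrder (KleinGroup.toModel.isOfFinOrder hfin)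
end

section
/- In the commutative monoid M presented by generators σ, τ with the single relation σ·τ = σ³, every nonidentity element can be written uniquely as either τ^b for some b ≥ 1 or σ^a for some a ≥ 1; in particular σ^a = σ^{a'} implies a = a', τ^b = τ^{b'} implies b = b', and σ^a ≠ τ^b for all a, b ≥ 1. -/
/-- Relations presenting the commutative monoid `⟨σ, τ | στ = σ³⟩` (as a quotient of the
free monoid on `Bool`, where `false` stands for `σ` and `true` for `τ`): the commutativity
relation `στ = τσ` together with `στ = σ³`. -/
def surfRels : FreeMonoid Bool → FreeMonoid Bool → Prop := fun x y =>
  (x = FreeMonoid.of false * FreeMonoid.of true ∧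
     y = FreeMonoid.of true * FreeMonoid.of false) ∨
  (x = FreeMonoid.of false * FreeMonoid.of true ∧
     y = FreeMonoid.of false * FreeMonoid.of false * FreeMonoid.of false)

/-- The commutative monoid `M = ⟨σ, τ | στ = σ³⟩`. -/
def SurfMonoid := PresentedMonoid surfRels

instance : Monoid SurfMonoid := by unfold SurfMonoid; infer_instance

def SurfMonoid.σ : SurfMonoid := PresentedMonoid.of surfRels false
def SurfMonoid.τ : SurfMonoid := PresentedMonoid.of surfRels true

/-! Since `σ` and `τ` commute, every element is `σ^a τ^b`, and once `a ≥ 1` each `τ` can be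
traded for `σ²`. Uniqueness is seen through two homomorphisms to `(ℕ, *)`: `σ ↦ 2, τ ↦ 4`
separates the powers of `σ` and those of `τ`, and `σ ↦ 0, τ ↦ 1` separates positive powers
of `σ` from powers of `τ`. -/

theorem Submonoid.exists_pow_mul_pow_of_mem_closure_pair {M : Type*} [Monoid M] {s t : M}
    (hst : Commute s t) {x : M} (hx : x ∈ closure {s, t}) : ∃ a b : ℕ, x = s ^ a * t ^ b := by
  induction hx using closure_induction_left with
  | one => exact ⟨0, 0, by simp⟩
  | mul_left g hg y _ ih =>
    obtain ⟨a, b, rfl⟩ := ih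
    rcases hg with rfl | rfl
    · exact ⟨a + 1, b, by rw [pow_succ', mul_assoc]⟩
    · exact ⟨a, b + 1, by rw [← mul_assoc, (hst.pow_left a).eq.symm, mul_assoc, ← pow_succ']⟩

theorem pow_succ_mul_pow_of_mul_eq_pow_three {M : Type*} [Monoid M] {s t : M}
    (h : s * t = s ^ 3) (a b : ℕ) : s ^ (a + 1) * t ^ b = s ^ (a + 1 + 2 * b) := by
  induction b with
  | zero => simp
  | succ b ih =>
    calc s ^ (a + 1) * t ^ (b + 1) = s ^ (a + 2 * b) * (s * t) := by
          rw [pow_succ t, ← mul_assoc, ih, add_right_comm, pow_succ, mul_assoc]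
      _ = s ^ (a + 1 + 2 * (b + 1)) := by rw [h, ← pow_add]; congr 1; omega

namespace SurfMonoid

theorem commute_σ_τ : Commute σ τ :=
  PresentedMonoid.mk_eq_mk_of_rel (Or.inl ⟨rfl, rfl⟩)

theorem σ_mul_τ : σ * τ = σ ^ 3 := by
  rw [pow_three']
  exact PresentedMonoid.mk_eq_mk_of_rel (Or.inr ⟨rfl, rfl⟩)

theorem closure_σ_τ : Submonoid.closure {σ, τ} = ⊤ := by
  have h := PresentedMonoid.closure_range_of surfRels
  rw [Bool.range_eq] at h
  exact h

theorem exists_eq_σ_pow_mul_τ_pow (x : SurfMonoid) : ∃ a b : ℕ, x = σ ^ a * τ ^ b :=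
  Submonoid.exists_pow_mul_pow_of_mem_closure_pair commute_σ_τ (closure_σ_τ ▸ Submonoid.mem_top x)

def lift {N : Type*} [Monoid N] (s t : N) (hst : s * t = t * s) (hs : s * t = s * s * s) :
    SurfMonoid →* N :=
  PresentedMonoid.lift (fun b => cond b t s) <| by
    rintro x y (⟨rfl, rfl⟩ | ⟨rfl, rfl⟩) <;> simpa

section lift

variable {N : Type*} [Monoid N] (s t : N) (hst : s * t = t * s) (hs : s * t = s * s * s)

@[simp] theorem lift_σ : lift s t hst hs σ = s := rfl

@[simp] theorem lift_τ : lift s t hst hs τ = t := rfl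

end lift

def weight : SurfMonoid →* ℕ := lift 2 4 rfl rfl

def σFreeIndicator : SurfMonoid →* ℕ := lift 0 1 rfl rfl

theorem σ_pow_injective : Function.Injective (σ ^ · : ℕ → SurfMonoid) := fun a a' h => by
  simpa [weight] using congrArg weight h

theorem τ_pow_injective : Function.Injective (τ ^ · : ℕ → SurfMonoid) := fun b b' h => by
  simpa [weight] using congrArg weight h

theorem σ_pow_ne_τ_pow {a : ℕ} (ha : a ≠ 0) (b : ℕ) : σ ^ a ≠ τ ^ b := fun h => by
  simpa [σFreeIndicator, ha] using congrArg σFreeIndicator h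

end SurfMonoid

/-- In `M = ⟨σ, τ | στ = σ³⟩`, every nonidentity element is uniquely of the form `σ^a`
(`a ≥ 1`) or `τ^b` (`b ≥ 1`): the powers `σ^a` are pairwise distinct, the powers `τ^b`
are pairwise distinct, and no `σ^a` equals a `τ^b`. -/
theorem surf_monoid_normal_form :
    (∀ x : SurfMonoid, x ≠ 1 →
        (∃ a : ℕ, 1 ≤ a ∧ x = SurfMonoid.σ ^ a) ∨ (∃ b : ℕ, 1 ≤ b ∧ x = SurfMonoid.τ ^ b)) ∧
    (∀ a a' : ℕ, 1 ≤ a → 1 ≤ a' → SurfMonoid.σ ^ a = SurfMonoid.σ ^ a' → a = a') ∧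
    (∀ b b' : ℕ, 1 ≤ b → 1 ≤ b' → SurfMonoid.τ ^ b = SurfMonoid.τ ^ b' → b = b') ∧
    (∀ a b : ℕ, 1 ≤ a → 1 ≤ b → SurfMonoid.σ ^ a ≠ SurfMonoid.τ ^ b) := by
  refine ⟨fun x hx => ?_, fun _ _ _ _ h => SurfMonoid.σ_pow_injective h,
    fun _ _ _ _ h => SurfMonoid.τ_pow_injective h,
    fun a b ha _ => SurfMonoid.σ_pow_ne_τ_pow (Nat.one_le_iff_ne_zero.mp ha) b⟩
  obtain ⟨a, b, rfl⟩ := SurfMonoid.exists_eq_σ_pow_mul_τ_pow x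
  rcases a with _ | a
  · refine .inr ⟨b, Nat.one_le_iff_ne_zero.mpr ?_, one_mul _⟩
    rintro rfl
    exact hx (by simp)
  · exact .inl ⟨a + 1 + 2 * b, by omega,
      pow_succ_mul_pow_of_mul_eq_pow_three SurfMonoid.σ_mul_τ a b⟩
end
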